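/- arXiv:1210.5608 — 3 statements merged into one kernel-verified Lean document; each statement's English description precedes it below -/
import Mathlib

section
/- For every ν ∈ ℂ with Re(ν) > 0, every t ∈ ℂ and every real σ > 0, the integral (1/2πi)·∫_{σ−i∞}^{σ+i∞} w^{−ν−1}·e^{w + t/w} dw over the vertical line Re(w) = σ converges absolutely and equals L_ν(t). -/
open Complex MeasureTheory Real

noncomputable section

/-- The function `L_ν(t) = Σ_{n≥0} tⁿ/(n! Γ(n+ν+1))`. -/
def Lf (ν t : ℂ) : ℂ := ∑' n : ℕ, t ^ n / ((n.factorial : ℂ) * Complex.Gamma ((n : ℂ) + ν + 1))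

/-!
Expanding `e^{t/w} = Σ (t/w)ⁿ/n!` reduces the claim to the Hankel-type formula
`∫_{Re w = σ} w^{-s} e^w dw = 2πi/Γ(s)` for `Re s > 1`, applied with `s = ν + 1 + n`. The series
may be integrated termwise because `|t/w| ≤ |t|/σ` on the line and `|w^{-ν-1}|` is integrable
there when `Re ν > 0`. The Hankel-type formula is Fourier inversion, at the point `1`, for
`x ↦ x^{s-1} e^{-σx}` on `x > 0`: its Fourier transform is `Γ(s) (σ + 2πiξ)^{-s}`, by the Gamma
integral `∫₀^∞ x^{s-1} e^{-cx} dx = Γ(s) c^{-s}` continued analytically from real to complex `c`.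
-/

open Set Filter Topology FourierTransform
open scoped Nat

theorem norm_cpow_le_rpow_mul_exp (z s : ℂ) :
    ‖z ^ s‖ ≤ ‖z‖ ^ s.re * Real.exp (π * |s.im|) := by
  refine (norm_cpow_le z s).trans ?_
  rw [div_eq_mul_inv, ← Real.exp_neg]
  gcongr
  calc -(arg z * s.im) ≤ |arg z| * |s.im| := by rw [← abs_mul]; exact neg_le_abs _
    _ ≤ π * |s.im| := by gcongr; exact abs_arg_le_pi z

theorem integrableOn_cpow_mul_exp_neg_mul_Ioi {a c : ℂ} (ha : 0 < a.re) (hc : 0 < c.re) :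
    IntegrableOn (fun x : ℝ => (x : ℂ) ^ (a - 1) * exp (-(c * x))) (Ioi 0) := by
  have hmeas : AEStronglyMeasurable (fun x : ℝ => (x : ℂ) ^ (a - 1) * exp (-(c * x)))
      (volume.restrict (Ioi 0)) := by
    refine ContinuousOn.aestronglyMeasurable (fun x hx => ?_) measurableSet_Ioi
    exact ((continuousAt_ofReal_cpow_const _ _ (Or.inr (ne_of_gt hx))).mul
      (by fun_prop)).continuousWithinAt
  refine (integrable_norm_iff hmeas).mp <| (integrableOn_rpow_mul_exp_neg_mul_rpow
    (p := 1) (s := a.re - 1) (by linarith) one_pos hc).congr_fun (fun x hx => ?_) measurableSet_Ioi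
  simp [norm_cpow_eq_rpow_re_of_pos hx, norm_exp]

theorem differentiableOn_integral_cpow_mul_exp_neg_mul_Ioi {a : ℂ} (ha : 0 < a.re) :
    DifferentiableOn ℂ (fun c : ℂ => ∫ x : ℝ in Ioi 0, (x : ℂ) ^ (a - 1) * exp (-(c * x)))
      {c | 0 < c.re} := by
  intro c hc
  have hc : 0 < c.re := hc
  obtain ⟨ε, hε, hcε⟩ : ∃ ε : ℝ, 0 < ε ∧ c.re = 2 * ε := ⟨c.re / 2, by positivity, by ring⟩
  have hball : ∀ z ∈ Metric.ball c ε, ε < z.re := fun z hz => by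
    have := (abs_re_le_norm (z - c)).trans_lt (mem_ball_iff_norm.mp hz)
    rw [sub_re] at this
    linarith [neg_abs_le (z.re - c.re)]
  have hbound :
      IntegrableOn (fun x : ℝ => ‖(x : ℂ) ^ ((a + 1) - 1) * exp (-((ε : ℂ) * x))‖) (Ioi 0) :=
    (integrableOn_cpow_mul_exp_neg_mul_Ioi (by simp; linarith) (by simpa using hε)).norm
  refine (hasDerivAt_integral_of_dominated_loc_of_deriv_le (μ := volume.restrict (Ioi 0))
    (F := fun (z : ℂ) (x : ℝ) => (x : ℂ) ^ (a - 1) * exp (-(z * x)))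
    (F' := fun (z : ℂ) (x : ℝ) => (x : ℂ) ^ (a - 1) * (exp (-(z * x)) * -x))
    (Metric.ball_mem_nhds c hε) ?_ (integrableOn_cpow_mul_exp_neg_mul_Ioi ha hc) ?_ ?_ hbound ?_
    ).2.differentiableAt.differentiableWithinAt
  · filter_upwards [(isOpen_lt continuous_const continuous_re).mem_nhds hc] with z hz
    exact (integrableOn_cpow_mul_exp_neg_mul_Ioi ha hz).aestronglyMeasurable
  · exact ((integrableOn_cpow_mul_exp_neg_mul_Ioi ha hc).aestronglyMeasurable.mul
      continuous_ofReal.neg.aestronglyMeasurable).congr (ae_of_all _ fun x => mul_assoc _ _ _)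
  · filter_upwards [ae_restrict_mem measurableSet_Ioi] with x (hx : 0 < x) z hz
    simp only [norm_mul, norm_neg, norm_real, norm_cpow_eq_rpow_re_of_pos hx, norm_exp,
      Real.norm_of_nonneg hx.le, add_sub_cancel_right, neg_re, mul_re, ofReal_re, ofReal_im,
      mul_zero, sub_zero, sub_re, one_re, Real.rpow_sub_one hx.ne']
    calc x ^ a.re / x * (Real.exp (-(z.re * x)) * x) = x ^ a.re * Real.exp (-(z.re * x)) := by
          field_simp
      _ ≤ x ^ a.re * Real.exp (-(ε * x)) := by
          gcongr
          exact (hball z hz).le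
  · filter_upwards with x z _
    simpa using (((hasDerivAt_id z).mul_const (x : ℂ)).neg.cexp.const_mul ((x : ℂ) ^ (a - 1)))

-- Both sides are holomorphic in `c` on the right half-plane and agree for real `c > 0`.
theorem integral_cpow_mul_exp_neg_mul_Ioi_of_re_pos {a c : ℂ} (ha : 0 < a.re) (hc : 0 < c.re) :
    ∫ x : ℝ in Ioi 0, (x : ℂ) ^ (a - 1) * exp (-(c * x)) = Gamma a * c ^ (-a) := by
  have hU : IsOpen {c : ℂ | 0 < c.re} := isOpen_lt continuous_const continuous_re
  have hF := (differentiableOn_integral_cpow_mul_exp_neg_mul_Ioi ha).analyticOnNhd hU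
  have hG : AnalyticOnNhd ℂ (fun c : ℂ => Gamma a * c ^ (-a)) {c | 0 < c.re} :=
    DifferentiableOn.analyticOnNhd (fun c hc => ((differentiableAt_id.cpow_const
      (Or.inl hc)).const_mul _).differentiableWithinAt) hU
  have hreal : ∀ r : ℝ, 0 < r →
      ∫ x : ℝ in Ioi 0, (x : ℂ) ^ (a - 1) * exp (-((r : ℂ) * x)) = Gamma a * (r : ℂ) ^ (-a) := by
    intro r hr
    rw [integral_cpow_mul_exp_neg_mul_Ioi ha hr, one_div,
      inv_cpow _ _ (by simpa [arg_ofReal_of_nonneg hr.le] using pi_ne_zero.symm), ← cpow_neg,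
      mul_comm]
  have hofReal : Tendsto ((↑) : ℝ → ℂ) (𝓝[≠] 1) (𝓝[≠] 1) :=
    tendsto_nhdsWithin_iff.mpr
      ⟨(continuous_ofReal.tendsto' 1 1 ofReal_one).mono_left nhdsWithin_le_nhds,
        eventually_nhdsWithin_of_forall fun x hx => by simpa using hx⟩
  refine hF.eqOn_of_preconnected_of_frequently_eq hG (convex_halfSpace_re_gt 0).isPreconnected
    (by simp) (hofReal.frequently ?_) hc
  exact (((eventually_gt_nhds one_pos).filter_mono nhdsWithin_le_nhds).mono hreal).frequently

theorem abs_le_norm_verticalLine (σ y : ℝ) : |σ| ≤ ‖(σ : ℂ) + y * I‖ := by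
  simpa using abs_re_le_norm ((σ : ℂ) + y * I)

theorem verticalLine_ne_zero {σ : ℝ} (hσ : σ ≠ 0) (y : ℝ) : (σ : ℂ) + y * I ≠ 0 :=
  fun h => hσ (by simpa using congrArg re h)

theorem norm_div_verticalLine_le {σ : ℝ} (hσ : 0 < σ) (t : ℂ) (y : ℝ) :
    ‖t / ((σ : ℂ) + y * I)‖ ≤ ‖t‖ / σ := by
  rw [norm_div]
  gcongr
  simpa [abs_of_pos hσ] using abs_le_norm_verticalLine σ y

theorem integrable_verticalLine_cpow_neg {σ : ℝ} (hσ : 0 < σ) {s : ℂ} (hs : 1 < s.re) :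
    Integrable fun y : ℝ => ((σ : ℂ) + y * I) ^ (-s) := by
  obtain ⟨c, hc, hcσ, hc1⟩ : ∃ c : ℝ, 0 < c ∧ c ≤ σ ∧ c ≤ 1 :=
    ⟨min σ 1, lt_min hσ one_pos, min_le_left _ _, min_le_right _ _⟩
  refine ((integrable_one_add_norm (by simpa using hs)).const_mul
    ((c / 2) ^ (-s.re) * Real.exp (π * |s.im|))).mono' ?_ (ae_of_all _ fun y => ?_)
  · exact (Continuous.cpow (by fun_prop) continuous_const
      fun y => Or.inl (by simpa using hσ)).aestronglyMeasurable
  have hre : σ ≤ ‖(σ : ℂ) + y * I‖ := by simpa [abs_of_pos hσ] using abs_le_norm_verticalLine σ y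
  have him : |y| ≤ ‖(σ : ℂ) + y * I‖ := by simpa using abs_im_le_norm ((σ : ℂ) + y * I)
  have hlower : c / 2 * (1 + ‖y‖) ≤ ‖(σ : ℂ) + y * I‖ := by
    rw [Real.norm_eq_abs]
    nlinarith [abs_nonneg y]
  calc ‖((σ : ℂ) + y * I) ^ (-s)‖ ≤ ‖(σ : ℂ) + y * I‖ ^ (-s.re) * Real.exp (π * |s.im|) := by
        simpa using norm_cpow_le_rpow_mul_exp ((σ : ℂ) + y * I) (-s)
    _ ≤ (c / 2 * (1 + ‖y‖)) ^ (-s.re) * Real.exp (π * |s.im|) :=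
        mul_le_mul_of_nonneg_right (Real.rpow_le_rpow_of_nonpos (by positivity) hlower
          (by linarith)) (Real.exp_pos _).le
    _ = (c / 2) ^ (-s.re) * Real.exp (π * |s.im|) * (1 + ‖y‖) ^ (-s.re) := by
        rw [Real.mul_rpow (by positivity) (by positivity)]
        ring

def gammaKernel (s : ℂ) (σ : ℝ) : ℝ → ℂ :=
  (Ioi 0).indicator fun x => (x : ℂ) ^ (s - 1) * exp (-((σ : ℂ) * x))

theorem integrable_gammaKernel {s : ℂ} (hs : 0 < s.re) {σ : ℝ} (hσ : 0 < σ) :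
    Integrable (gammaKernel s σ) :=
  (integrable_indicator_iff measurableSet_Ioi).mpr
    (integrableOn_cpow_mul_exp_neg_mul_Ioi hs (by simpa using hσ))

theorem fourier_gammaKernel {s : ℂ} (hs : 0 < s.re) {σ : ℝ} (hσ : 0 < σ) (ξ : ℝ) :
    𝓕 (gammaKernel s σ) ξ = Gamma s * ((σ : ℂ) + (2 * π * ξ : ℝ) * I) ^ (-s) := by
  rw [Real.fourier_real_eq_integral_exp_smul, ← integral_cpow_mul_exp_neg_mul_Ioi_of_re_pos hs
    (by simpa using hσ), ← integral_indicator measurableSet_Ioi]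
  congr 1 with x
  by_cases hx : x ∈ Ioi 0
  · simp only [gammaKernel, indicator_of_mem hx, smul_eq_mul, ← Complex.exp_add,
      mul_left_comm _ (_ ^ _)]
    congr 2
    push_cast
    ring
  · simp [gammaKernel, indicator_of_notMem hx]

theorem integral_verticalLine_cpow_neg_mul_exp {s : ℂ} (hs : 1 < s.re) {σ : ℝ} (hσ : 0 < σ) :
    ∫ y : ℝ, ((σ : ℂ) + y * I) ^ (-s) * exp ((σ : ℂ) + y * I) = 2 * π / Gamma s := by
  have hs0 : 0 < s.re := one_pos.trans hs
  have hFf : Integrable (𝓕 (gammaKernel s σ)) := by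
    rw [funext (fourier_gammaKernel hs0 hσ)]
    exact ((integrable_verticalLine_cpow_neg hσ hs).comp_mul_left' two_pi_pos.ne').const_mul _
  have hf_cont : ContinuousAt (gammaKernel s σ) 1 := by
    refine ContinuousAt.congr (f := fun x : ℝ => (x : ℂ) ^ (s - 1) * exp (-((σ : ℂ) * x)))
      ((continuousAt_ofReal_cpow_const _ _ (Or.inr one_ne_zero)).mul (by fun_prop)) ?_
    filter_upwards [isOpen_Ioi.mem_nhds (one_pos : (0 : ℝ) < 1)] with x hx
    simp [gammaKernel, indicator_of_mem hx]
  have hf_one : gammaKernel s σ 1 = exp (-(σ : ℂ)) := by simp [gammaKernel]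
  set Φ := fun y : ℝ => ((σ : ℂ) + y * I) ^ (-s) * exp ((σ : ℂ) + y * I)
  have hinv :
      𝓕⁻ (𝓕 (gammaKernel s σ)) 1 = Gamma s * exp (-(σ : ℂ)) * ((2 * π)⁻¹ * ∫ y, Φ y) := by
    rw [Real.fourierInv_eq_fourier_neg, Real.fourier_real_eq_integral_exp_smul]
    calc _ = ∫ ξ : ℝ, Gamma s * exp (-(σ : ℂ)) * Φ (2 * π * ξ) := by
          congr 1 with ξ
          rw [fourier_gammaKernel hs0 hσ, smul_eq_mul]
          simp only [Φ, Complex.exp_add, Complex.exp_neg]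
          push_cast
          field_simp
      _ = _ := by
          rw [integral_const_mul, Measure.integral_comp_mul_left, abs_of_pos (by positivity)]
          simp
  rw [(integrable_gammaKernel hs0 hσ).fourierInv_fourier_eq hFf hf_cont, hf_one] at hinv
  have hΓ : Gamma s ≠ 0 := Gamma_ne_zero_of_re_pos hs0
  push_cast at hinv
  field_simp at hinv ⊢
  linear_combination -hinv

theorem integrable_verticalLine_cpow_neg_mul_exp {σ : ℝ} (hσ : 0 < σ) {s : ℂ} (hs : 1 < s.re) :
    Integrable fun y : ℝ => ((σ : ℂ) + y * I) ^ (-s) * exp ((σ : ℂ) + y * I) :=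
  (integrable_verticalLine_cpow_neg hσ hs).mul_bdd (c := Real.exp σ) (by fun_prop)
    (ae_of_all _ fun y => by simp [norm_exp])

theorem integrable_verticalLine_cpow_mul_exp_add_div {ν : ℂ} (hν : 0 < ν.re) (t : ℂ) {σ : ℝ}
    (hσ : 0 < σ) :
    Integrable fun y : ℝ =>
      ((σ : ℂ) + y * I) ^ (-ν - 1) * exp ((σ : ℂ) + y * I + t / ((σ : ℂ) + y * I)) := by
  refine ((integrable_verticalLine_cpow_neg_mul_exp hσ (s := ν + 1) (by simpa using hν)).mul_bdd
    (g := fun y : ℝ => exp (t / ((σ : ℂ) + y * I))) (c := Real.exp (‖t‖ / σ)) ?_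
    (ae_of_all _ fun y => ?_)).congr (ae_of_all _ fun y => ?_)
  · exact (Continuous.cexp (continuous_const.div (by fun_prop)
      (verticalLine_ne_zero hσ.ne'))).aestronglyMeasurable
  · exact (norm_exp_le_exp_norm _).trans (Real.exp_le_exp.mpr (norm_div_verticalLine_le hσ t y))
  · simp only [Complex.exp_add, neg_add', mul_assoc]

theorem integral_verticalLine_cpow_mul_exp_add_div {ν : ℂ} (hν : 0 < ν.re) (t : ℂ) {σ : ℝ}
    (hσ : 0 < σ) :
    ∫ y : ℝ, ((σ : ℂ) + y * I) ^ (-ν - 1) * exp ((σ : ℂ) + y * I + t / ((σ : ℂ) + y * I))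
      = 2 * π * Lf ν t := by
  set g := fun y : ℝ => ((σ : ℂ) + y * I) ^ (-(ν + 1)) * exp ((σ : ℂ) + y * I)
  have hg : Integrable g := integrable_verticalLine_cpow_neg_mul_exp hσ (by simpa using hν)
  set F := fun (n : ℕ) (y : ℝ) => g y * ((t / ((σ : ℂ) + y * I)) ^ n / n !)
  have hfactor_le : ∀ (n : ℕ) (y : ℝ),
      ‖(t / ((σ : ℂ) + y * I)) ^ n / (n ! : ℂ)‖ ≤ (‖t‖ / σ) ^ n / n ! := fun n y => by
    rw [norm_div, norm_pow, Complex.norm_natCast]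
    gcongr
    exact norm_div_verticalLine_le hσ t y
  have hF_int : ∀ n, Integrable (F n) := fun n =>
    hg.mul_bdd ((continuous_const.div (by fun_prop) (verticalLine_ne_zero hσ.ne')).pow n
      |>.div_const _).aestronglyMeasurable (ae_of_all _ (hfactor_le n))
  have hF_summable : Summable fun n => ∫ y, ‖F n y‖ := by
    refine .of_nonneg_of_le (fun n => integral_nonneg fun y => norm_nonneg _) (fun n => ?_)
      ((Real.summable_pow_div_factorial (‖t‖ / σ)).mul_left (∫ y, ‖g y‖))
    rw [← integral_mul_const]
    refine integral_mono (hF_int n).norm (hg.norm.mul_const _) fun y => ?_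
    simpa only [F, norm_mul] using mul_le_mul_of_nonneg_left (hfactor_le n y) (norm_nonneg (g y))
  have hF_tsum : ∀ y : ℝ, ((σ : ℂ) + y * I) ^ (-ν - 1) *
      exp ((σ : ℂ) + y * I + t / ((σ : ℂ) + y * I)) = ∑' n, F n y := fun y => by
    have hexp := (NormedSpace.expSeries_div_hasSum_exp (t / ((σ : ℂ) + y * I))).tsum_eq
    rw [← Complex.exp_eq_exp_ℂ] at hexp
    simp only [F, g, tsum_mul_left, hexp, Complex.exp_add, neg_add', mul_assoc]
  have hF_integral : ∀ n, ∫ y, F n y = 2 * π * (t ^ n / (n ! * Gamma (n + ν + 1))) := fun n => by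
    have hs : 1 < (ν + 1 + n).re := by
      simp only [add_re, one_re, natCast_re]
      linarith [(n.cast_nonneg : (0 : ℝ) ≤ n)]
    calc ∫ y, F n y = ∫ y : ℝ, t ^ n / n ! *
          (((σ : ℂ) + y * I) ^ (-(ν + 1 + n)) * exp ((σ : ℂ) + y * I)) := by
          congr 1 with y
          rw [show -(ν + 1 + n) = -(ν + 1) - n by ring,
            cpow_sub _ _ (verticalLine_ne_zero hσ.ne' y), cpow_natCast]
          simp only [F, g, div_pow]
          ring
      _ = _ := by
          rw [integral_const_mul, integral_verticalLine_cpow_neg_mul_exp hs hσ,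
            show ν + 1 + n = n + ν + 1 by ring]
          field_simp
  rw [integral_congr_ae (ae_of_all _ hF_tsum), ← integral_tsum_of_summable_integral_norm hF_int
    hF_summable, tsum_congr hF_integral, tsum_mul_left, Lf]

/-- **Proposition 2.** For every `ν ∈ ℂ` with `Re ν > 0`, every `t ∈ ℂ` and every real `σ > 0`,
the integral `(1/2πi) ∫_{σ-i∞}^{σ+i∞} w^{-ν-1} e^{w + t/w} dw` over the vertical line
`Re w = σ` (parametrized as `w = σ + iy`, `dw = i dy`) converges absolutely and
equals `L_ν(t)`.  Here `w^{-ν-1} = e^{(-ν-1) log w}` with `Im (log w) ∈ (-π, π]`. -/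
theorem besselL_vertical_line_integral (ν : ℂ) (hν : 0 < ν.re) (t : ℂ) (σ : ℝ) (hσ : 0 < σ) :
    Integrable (fun y : ℝ =>
        ((σ : ℂ) + y * I) ^ (-ν - 1) *
          Complex.exp (((σ : ℂ) + y * I) + t / ((σ : ℂ) + y * I))) ∧
    (2 * (π : ℂ) * I)⁻¹ *
        ∫ y : ℝ, ((σ : ℂ) + y * I) ^ (-ν - 1) *
          Complex.exp (((σ : ℂ) + y * I) + t / ((σ : ℂ) + y * I)) * I
      = Lf ν t := by
  refine ⟨integrable_verticalLine_cpow_mul_exp_add_div hν t hσ, ?_⟩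
  rw [integral_mul_const, integral_verticalLine_cpow_mul_exp_add_div hν t hσ]
  field_simp [pi_ne_zero, I_ne_zero]
end
end

section
/- Let L ≠ 0 be an entire function given by a power series Σ_{n≥0} b_n·tⁿ with nonnegative real coefficients b_n, and let α′, α be real numbers with 0 < α′ < α. Then the function t ↦ L(tα′)/L(tα) is nonincreasing on (0, +∞) (in particular L(tα) > 0 for t > 0). Moreover, if L is not a polynomial (i.e. b_n ≠ 0 for infinitely many n), then L(tα′)/L(tα) → 0 as t → +∞. -/
/-!
Write `L(x) = Σ bₙ xⁿ`. For `0 < s ≤ t`, the difference `L(sα′)L(tα) - L(tα′)L(sα)` is a double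
series over pairs `(m, n)` whose terms, symmetrised in `m ↔ n`, equal
`bₘbₙ (sᵐtⁿ - sⁿtᵐ)(α′ᵐαⁿ - α′ⁿαᵐ) ≥ 0`; this gives the monotonicity. For the limit, put
`r = α′/α < 1`: the coefficients of index `≥ N` contribute at most `rᴺ L(tα)` to `L(tα′)`, while
the first `N` of them are a polynomial in `t` which `L(tα) ≥ b_M (tα)ᴹ`, with `M ≥ N` and `b_M > 0`,
outgrows.
-/

open Filter Topology

lemma pow_mul_pow_sub_pow_mul_pow_nonneg {x y : ℝ} (hx : 0 ≤ x) (hxy : x ≤ y) {m n : ℕ}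
    (hmn : m ≤ n) : 0 ≤ x ^ m * y ^ n - x ^ n * y ^ m := by
  obtain ⟨k, rfl⟩ := Nat.exists_eq_add_of_le hmn
  have hy : 0 ≤ y := hx.trans hxy
  have hfactor : x ^ m * y ^ (m + k) - x ^ (m + k) * y ^ m = (x * y) ^ m * (y ^ k - x ^ k) := by
    ring
  rw [hfactor]
  exact mul_nonneg (by positivity) (sub_nonneg.2 (pow_le_pow_left₀ hx hxy k))

lemma pow_mul_pow_sub_mul_pow_mul_pow_sub_nonneg {x y u v : ℝ} (hx : 0 ≤ x) (hxy : x ≤ y)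
    (hu : 0 ≤ u) (huv : u ≤ v) (m n : ℕ) :
    0 ≤ (x ^ m * y ^ n - x ^ n * y ^ m) * (u ^ m * v ^ n - u ^ n * v ^ m) := by
  rcases le_total m n with hmn | hnm
  · exact mul_nonneg (pow_mul_pow_sub_pow_mul_pow_nonneg hx hxy hmn)
      (pow_mul_pow_sub_pow_mul_pow_nonneg hu huv hmn)
  · have hxy' := pow_mul_pow_sub_pow_mul_pow_nonneg hx hxy hnm
    have huv' := pow_mul_pow_sub_pow_mul_pow_nonneg hu huv hnm
    rw [← neg_mul_neg]
    exact mul_nonneg (by linarith) (by linarith)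

lemma HasSum.nonneg_of_add_swap_nonneg {ι : Type*} {f : ι × ι → ℝ} {a : ℝ} (hf : HasSum f a)
    (hswap : ∀ p, 0 ≤ f p + f p.swap) : 0 ≤ a := by
  have hf' : HasSum (f ∘ Prod.swap) a := (Equiv.prodComm ι ι).hasSum_iff.2 hf
  linarith [(hf.add hf').nonneg hswap]

lemma HasSum.mul_real {ι κ : Type*} {f : ι → ℝ} {g : κ → ℝ} {a c : ℝ} (hf : HasSum f a)
    (hg : HasSum g c) : HasSum (fun p : ι × κ => f p.1 * g p.2) (a * c) :=
  hf.mul hg <| summable_mul_of_summable_norm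
    (summable_abs_iff.2 hf.summable) (summable_abs_iff.2 hg.summable)

lemma tendsto_sum_range_mul_pow_div_pow_atTop (c : ℕ → ℝ) {N M : ℕ} (hNM : N ≤ M) :
    Tendsto (fun t : ℝ => (∑ n ∈ Finset.range N, c n * t ^ n) / t ^ M) atTop (𝓝 0) := by
  simp_rw [Finset.sum_div, mul_div_assoc]
  rw [← Finset.sum_const_zero (s := Finset.range N)]
  refine tendsto_finsetSum _ fun n hn => ?_
  simpa using (tendsto_pow_div_pow_atTop_zero
    ((Finset.mem_range.1 hn).trans_le hNM)).const_mul (c n)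

section PowerSeries

variable {b : ℕ → ℝ} {L : ℝ → ℝ}

lemma pos_of_hasSum_mul_pow (hb : ∀ n, 0 ≤ b n) (hne : ∃ n, b n ≠ 0) {x a : ℝ} (hx : 0 < x)
    (h : HasSum (fun n => b n * x ^ n) a) : 0 < a := by
  obtain ⟨m, hm⟩ := hne
  have hbm : 0 < b m := (hb m).lt_of_ne' hm
  exact (by positivity : 0 < b m * x ^ m).trans_le
    (le_hasSum h m fun n _ => mul_nonneg (hb n) (pow_nonneg hx.le n))

lemma cross_mul_le_of_hasSum_mul_pow (hb : ∀ n, 0 ≤ b n)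
    (hL : ∀ t : ℝ, HasSum (fun n : ℕ => b n * t ^ n) (L t))
    {α' α s t : ℝ} (hα' : 0 ≤ α') (hαα : α' ≤ α) (hs : 0 ≤ s) (hst : s ≤ t) :
    L (t * α') * L (s * α) ≤ L (s * α') * L (t * α) := by
  set f : ℕ × ℕ → ℝ := fun p => b p.1 * (s * α') ^ p.1 * (b p.2 * (t * α) ^ p.2) -
    b p.1 * (t * α') ^ p.1 * (b p.2 * (s * α) ^ p.2)
  have hf : HasSum f (L (s * α') * L (t * α) - L (t * α') * L (s * α)) :=
    ((hL _).mul_real (hL _)).sub ((hL _).mul_real (hL _))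
  have hswap : ∀ p, 0 ≤ f p + f p.swap := by
    rintro ⟨m, n⟩
    have hsymm : f (m, n) + f (m, n).swap =
        b m * b n * ((s ^ m * t ^ n - s ^ n * t ^ m) * (α' ^ m * α ^ n - α' ^ n * α ^ m)) := by
      simp only [f, Prod.swap]
      ring
    rw [hsymm]
    exact mul_nonneg (mul_nonneg (hb m) (hb n))
      (pow_mul_pow_sub_mul_pow_mul_pow_sub_nonneg hs hst hα' hαα m n)
  linarith [hf.nonneg_of_add_swap_nonneg hswap]

lemma le_sum_range_add_pow_mul_of_hasSum_mul_pow (hb : ∀ n, 0 ≤ b n)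
    (hL : ∀ t : ℝ, HasSum (fun n : ℕ => b n * t ^ n) (L t))
    {r x : ℝ} (hr : 0 ≤ r) (hr1 : r ≤ 1) (hx : 0 ≤ x) (N : ℕ) :
    L (r * x) ≤ ∑ n ∈ Finset.range N, b n * (r * x) ^ n + r ^ N * L x := by
  have hhead : HasSum (fun n => if n < N then b n * (r * x) ^ n else 0)
      (∑ n ∈ Finset.range N, b n * (r * x) ^ n) := by
    rw [← Finset.sum_ite_of_true fun n hn => Finset.mem_range.1 hn]
    exact hasSum_sum_of_ne_finset_zero fun n hn => if_neg (by simpa using hn)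
  refine hasSum_le (fun n => ?_) (hL (r * x)) (hhead.add ((hL x).mul_left (r ^ N)))
  have hbx : 0 ≤ b n * x ^ n := mul_nonneg (hb n) (pow_nonneg hx n)
  have htail : 0 ≤ r ^ N * (b n * x ^ n) := mul_nonneg (pow_nonneg hr N) hbx
  split_ifs with hn
  · linarith
  · calc b n * (r * x) ^ n = r ^ n * (b n * x ^ n) := by ring
      _ ≤ r ^ N * (b n * x ^ n) :=
        mul_le_mul_of_nonneg_right (pow_le_pow_of_le_one hr hr1 (by omega)) hbx
      _ = 0 + r ^ N * (b n * x ^ n) := (zero_add _).symm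

lemma tendsto_sum_range_div_of_hasSum_mul_pow (hb : ∀ n, 0 ≤ b n)
    (hL : ∀ t : ℝ, HasSum (fun n : ℕ => b n * t ^ n) (L t)) (hinf : {n : ℕ | b n ≠ 0}.Infinite)
    {α' α : ℝ} (hα' : 0 ≤ α') (hα : 0 < α) (N : ℕ) :
    Tendsto (fun t => (∑ n ∈ Finset.range N, b n * (t * α') ^ n) / L (t * α)) atTop (𝓝 0) := by
  obtain ⟨M, hbM_ne, hNM⟩ := hinf.exists_gt N
  have hbM : 0 < b M := (hb M).lt_of_ne' hbM_ne
  have hupper := tendsto_sum_range_mul_pow_div_pow_atTop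
    (fun n => b n * α' ^ n / (b M * α ^ M)) hNM.le
  refine tendsto_of_tendsto_of_tendsto_of_le_of_le' tendsto_const_nhds hupper ?_ ?_ <;>
    filter_upwards [eventually_gt_atTop 0] with t ht
  all_goals
    have hhead : 0 ≤ ∑ n ∈ Finset.range N, b n * (t * α') ^ n :=
      Finset.sum_nonneg fun n _ => mul_nonneg (hb n) (by positivity)
    have hterm : b M * (t * α) ^ M ≤ L (t * α) :=
      le_hasSum (hL _) M fun n _ => mul_nonneg (hb n) (by positivity)
  · exact div_nonneg hhead ((by positivity : 0 ≤ b M * (t * α) ^ M).trans hterm)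
  · calc (∑ n ∈ Finset.range N, b n * (t * α') ^ n) / L (t * α)
        ≤ (∑ n ∈ Finset.range N, b n * (t * α') ^ n) / (b M * (t * α) ^ M) :=
          div_le_div_of_nonneg_left hhead (by positivity) hterm
      _ = (∑ n ∈ Finset.range N, b n * α' ^ n / (b M * α ^ M) * t ^ n) / t ^ M := by
          simp_rw [Finset.sum_div]
          refine Finset.sum_congr rfl fun n _ => ?_
          field_simp
          ring

lemma tendsto_div_atTop_zero_of_hasSum_mul_pow (hb : ∀ n, 0 ≤ b n)
    (hL : ∀ t : ℝ, HasSum (fun n : ℕ => b n * t ^ n) (L t)) (hinf : {n : ℕ | b n ≠ 0}.Infinite)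
    {α' α : ℝ} (hα' : 0 < α') (hαα : α' < α) :
    Tendsto (fun t => L (t * α') / L (t * α)) atTop (𝓝 0) := by
  have hα : 0 < α := hα'.trans hαα
  have hpos : ∀ x, 0 < x → 0 < L x := fun x hx => pos_of_hasSum_mul_pow hb hinf.nonempty hx (hL x)
  have hr : 0 ≤ α' / α := by positivity
  have hr1 : α' / α < 1 := (div_lt_one hα).2 hαα
  refine tendsto_order.2 ⟨fun a ha => ?_, fun ε hε => ?_⟩
  · filter_upwards [eventually_gt_atTop 0] with t ht
    exact ha.trans_le (div_nonneg (hpos _ (by positivity)).le (hpos _ (by positivity)).le)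
  obtain ⟨N, hN⟩ := exists_pow_lt_of_lt_one (half_pos hε) hr1
  filter_upwards [eventually_gt_atTop 0, (tendsto_sum_range_div_of_hasSum_mul_pow hb hL hinf
    hα'.le hα N).eventually (gt_mem_nhds (half_pos hε))] with t ht hhead
  have hLα : 0 < L (t * α) := hpos _ (by positivity)
  have hsplit := le_sum_range_add_pow_mul_of_hasSum_mul_pow hb hL hr hr1.le
    (by positivity : 0 ≤ t * α) N
  rw [show α' / α * (t * α) = t * α' by field_simp] at hsplit
  calc L (t * α') / L (t * α)
      ≤ (∑ n ∈ Finset.range N, b n * (t * α') ^ n + (α' / α) ^ N * L (t * α)) / L (t * α) := by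
        gcongr
    _ = (∑ n ∈ Finset.range N, b n * (t * α') ^ n) / L (t * α) + (α' / α) ^ N := by
        field_simp
    _ < ε := by linarith

end PowerSeries

/-- **Lemma 3.** Let `L ≠ 0` be an entire function given by a power series `Σ bₙ tⁿ` with
nonnegative real coefficients (the series converging on all of `ℝ`, as the restriction to the
real axis of an entire function), and let `0 < α′ < α`. Then `t ↦ L(tα′)/L(tα)` is
nonincreasing on `(0, ∞)` (in particular `L(tα) > 0` for `t > 0`), and if `L` is not a
polynomial then `L(tα′)/L(tα) → 0` as `t → +∞`. -/
theorem lemma3_power_series_ratio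
    (b : ℕ → ℝ) (hb : ∀ n, 0 ≤ b n) (hne : ∃ n, b n ≠ 0)
    (L : ℝ → ℝ) (hL : ∀ t : ℝ, HasSum (fun n : ℕ => b n * t ^ n) (L t))
    (α' α : ℝ) (hα' : 0 < α') (hαα : α' < α) :
    (AntitoneOn (fun t : ℝ => L (t * α') / L (t * α)) (Set.Ioi 0)) ∧
    (∀ t : ℝ, 0 < t → 0 < L (t * α)) ∧
    ({n : ℕ | b n ≠ 0}.Infinite →
      Tendsto (fun t : ℝ => L (t * α') / L (t * α)) atTop (nhds 0)) := by
  have hpos : ∀ t : ℝ, 0 < t → 0 < L (t * α) := fun t ht =>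
    pos_of_hasSum_mul_pow hb hne (mul_pos ht (hα'.trans hαα)) (hL _)
  refine ⟨fun s hs t ht hst => ?_, hpos, fun hinf =>
    tendsto_div_atTop_zero_of_hasSum_mul_pow hb hL hinf hα' hαα⟩
  rw [div_le_div_iff₀ (hpos t ht) (hpos s hs)]
  exact cross_mul_le_of_hasSum_mul_pow hb hL hα'.le hαα.le (le_of_lt hs) hst
end

section
/- Let N ≥ 1 be an integer, γ = (a b; c d) ∈ SL₂(ℤ) with 0 < c ≤ N, and x = a/c. Let n and m be the largest integers with d + nc ≤ N and −d + mc ≤ N respectively, and set a′ = b + na, c′ = d + nc, a′′ = −b + ma, c′′ = −d + mc. Then 1 ≤ c′ ≤ N, 1 ≤ c′′ ≤ N, c + c′ ≥ N + 1 and c + c′′ ≥ N + 1, and: (a) a′/c′ is the predecessor of x in Q_N (the largest element of Q_N smaller than x) and a′′/c′′ is the successor of x in Q_N (the smallest element of Q_N larger than x); (b) the Ford circles C_{a′/c′} and C_x are tangent at the point R = (ac + a′c′ + i)/(c² + c′²) = (a′ + ia)/(c′ + ic), and C_x and C_{a′′/c′′} are tangent at the point S = (ac + a′′c′′ + i)/(c²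 + c′′²) = (a′′ − ia)/(c′′ − ic); in particular R lies on both circles C_{a′/c′} and C_x, and S lies on both C_x and C_{a′′/c′′}; (c) the imaginary parts of R and of S lie in the interval [1/(2N²), 2/(N+1)²]; (d) γ·(n + i) = R and γ·(−m + i) = S, where γ·z = (az+b)/(cz+d), and the image of the segment [n+i, −m+i] under z ↦ γ·z is the arc of C_x from R to S traversed clockwise. -/
open Complex Real

noncomputable section

abbrev SL2Z := Matrix.SpecialLinearGroup (Fin 2) ℤ

/-- Möbius action of `SL₂(ℤ)` on `ℂ`. -/
def moeb (γ : SL2Z) (z : ℂ) : ℂ :=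
  ((γ 0 0 : ℤ) * z + (γ 0 1 : ℤ)) / ((γ 1 0 : ℤ) * z + (γ 1 1 : ℤ))

/-- `Q_N`: the set of rational numbers whose denominator (in irreducible form) is `≤ N`. -/
def QN (N : ℕ) : Set ℚ := {q : ℚ | q.den ≤ N}

/-- The Ford circle `C_q`: the circle of radius `1/(2 den(q)²)` tangent to the real axis
at `q`, i.e. with center `q + i/(2 den(q)²)`. -/
def FordC (q : ℚ) : Set ℂ :=
  {z : ℂ | ‖z - ((q : ℂ) + I / (2 * ((q.den : ℂ)) ^ 2))‖ = 1 / (2 * ((q.den : ℝ)) ^ 2)}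

/-!
The columns `(a′, c′)`, `(a, c)` and `(a, c)`, `(a″, c″)` again form matrices of determinant 1,
so `a′/c′ < a/c < a″/c″` are pairs of Farey neighbours. A fraction strictly between neighbours
`p/q < p'/q'` has denominator at least `q + q'`, and maximality of `n` and `m` makes these sums
exceed `N`. The Ford circles of neighbours are tangent because the squared distance
`1/(c c′)²` of their base points is `4 r r′`, and the point of contact divides the segment of
centres in the ratio of the radii. For (d), with `O` the centre of `C_x` and `v = c u + d`,
`γ(u + i) = O + i/(2c²) · (c + i v)/(c − i v) = O + i/(2c²) · exp(2i arctan(v/c))`,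
so `γ` maps the line `Im z = 1` into `C_x`, and as `u` decreases from `n` to `−m` the angle
`2 arctan(v/c)` decreases continuously, tracing the arc from `R` to `S` clockwise.
-/

theorem sphere_inter_sphere_of_dist_eq_add {V P : Type*} [NormedAddCommGroup V]
    [NormedSpace ℝ V] [StrictConvexSpace ℝ V] [MetricSpace P] [NormedAddTorsor V P]
    {x y : P} {r s : ℝ} (hr : 0 < r) (hs : 0 ≤ s) (hxy : dist x y = r + s) :
    Metric.sphere x r ∩ Metric.sphere y s = {AffineMap.lineMap x y (r / (r + s))} := by
  have hrs : 0 < r + s := by positivity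
  ext z
  simp only [Set.mem_inter_iff, Metric.mem_sphere, Set.mem_singleton_iff]
  constructor
  · rintro ⟨hzx, hzy⟩
    obtain ⟨t, ⟨ht, -⟩, rfl⟩ : Wbtw ℝ x z y :=
      dist_add_dist_eq_iff.1 (by rw [dist_comm x z, hzx, hzy, hxy])
    rw [dist_comm, dist_left_lineMap, Real.norm_of_nonneg ht, hxy, ← eq_div_iff hrs.ne'] at hzx
    rw [hzx]
  · rintro rfl
    rw [dist_comm, dist_left_lineMap, dist_lineMap_right, hxy, one_sub_div hrs.ne',
      add_sub_cancel_left, Real.norm_of_nonneg (by positivity), Real.norm_of_nonneg (by positivity)]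
    constructor <;> field_simp

theorem dist_add_mul_I_eq_add_of_sq_sub_eq {p q r s : ℝ} (hr : 0 ≤ r) (hs : 0 ≤ s)
    (h : (p - q) ^ 2 = 4 * r * s) : dist ((p : ℂ) + r * I) (q + s * I) = r + s := by
  have hsub : (p : ℂ) + r * I - (q + s * I) = ((p - q : ℝ) : ℂ) + ((r - s : ℝ) : ℂ) * I := by
    push_cast
    ring
  rw [Complex.dist_eq, hsub, Complex.norm_add_mul_I, h,
    show 4 * r * s + (r - s) ^ 2 = (r + s) ^ 2 by ring, Real.sqrt_sq (by positivity)]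

theorem FordC_intCast_div {a c : ℤ} (hc : 0 < c) (hac : IsCoprime a c) :
    FordC (a / c) = Metric.sphere (((a / c : ℝ) : ℂ) + ((1 / (2 * c ^ 2) : ℝ) : ℂ) * I)
      (1 / (2 * c ^ 2)) := by
  have hden : ((a / c : ℚ).den : ℤ) = c :=
    Rat.den_div_eq_of_coprime hc (Int.isCoprime_iff_gcd_eq_one.mp hac)
  have hdenR : ((a / c : ℚ).den : ℝ) = c := by exact_mod_cast hden
  have hdenC : ((a / c : ℚ).den : ℂ) = c := by exact_mod_cast hden
  ext z
  simp only [FordC, Set.mem_ofPred_eq, Metric.mem_sphere, dist_eq_norm, hdenR, hdenC]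
  push_cast
  ring_nf

theorem FordC_inter_FordC {a c a' c' : ℤ} (hc : 0 < c) (hc' : 0 < c')
    (hdet : a * c' - a' * c = 1) :
    FordC (a' / c') ∩ FordC (a / c) =
      {((a * c + a' * c' : ℤ) + I) / ((c ^ 2 + c' ^ 2 : ℤ) : ℂ)} := by
  have hcR : (c : ℝ) ≠ 0 := by exact_mod_cast hc.ne'
  have hc'R : (c' : ℝ) ≠ 0 := by exact_mod_cast hc'.ne'
  have hdetR : (a : ℝ) * c' - a' * c = 1 := by exact_mod_cast hdet
  rw [FordC_intCast_div hc' ⟨-c, a, by linear_combination hdet⟩,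
    FordC_intCast_div hc ⟨c', -a', by linear_combination hdet⟩,
    sphere_inter_sphere_of_dist_eq_add (by positivity) (by positivity)
      (dist_add_mul_I_eq_add_of_sq_sub_eq (by positivity) (by positivity) ?_)]
  · have hcC : (c : ℂ) ≠ 0 := by exact_mod_cast hc.ne'
    have hc'C : (c' : ℂ) ≠ 0 := by exact_mod_cast hc'.ne'
    have hsum : ((c ^ 2 + c' ^ 2 : ℤ) : ℂ) ≠ 0 := by
      exact_mod_cast (by positivity : c ^ 2 + c' ^ 2 ≠ 0)
    rw [AffineMap.lineMap_apply_module]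
    congr 1
    simp only [Complex.real_smul]
    push_cast at hsum ⊢
    field_simp
    ring
  · field_simp
    linear_combination 4 * (a * c' - a' * c + 1) * hdetR

theorem add_le_den_of_lt_of_lt {a c a' c' : ℤ} (hc : 0 < c) (hc' : 0 < c')
    (hdet : a * c' - a' * c = 1) {q : ℚ} (hlt : (a' / c' : ℚ) < q) (hgt : q < a / c) :
    c + c' ≤ q.den := by
  have hcQ : (0 : ℚ) < c := by exact_mod_cast hc
  have hc'Q : (0 : ℚ) < c' := by exact_mod_cast hc'
  have hden : (0 : ℚ) < q.den := by positivity
  rw [← Rat.num_div_den q] at hlt hgt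
  rw [div_lt_div_iff₀ hc'Q hden] at hlt
  rw [div_lt_div_iff₀ hden hcQ] at hgt
  have hleft : a' * q.den < q.num * c' := by exact_mod_cast hlt
  have hright : q.num * c < a * q.den := by exact_mod_cast hgt
  have hsplit : (q.den : ℤ) = c' * (a * q.den - q.num * c) + c * (q.num * c' - a' * q.den) := by
    linear_combination (-(q.den : ℤ)) * hdet
  nlinarith

theorem intCast_div_mem_QN {a c : ℤ} {N : ℕ} (hc : 0 < c) (hac : IsCoprime a c)
    (hcN : c ≤ N) : (a / c : ℚ) ∈ QN N := by
  have hden : ((a / c : ℚ).den : ℤ) = c :=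
    Rat.den_div_eq_of_coprime hc (Int.isCoprime_iff_gcd_eq_one.mp hac)
  change (a / c : ℚ).den ≤ N
  omega

theorem isGreatest_QN_lt {N : ℕ} {a c a' c' : ℤ} (hc : 0 < c) (hc' : 0 < c') (hc'N : c' ≤ N)
    (hN : N < c + c') (hdet : a * c' - a' * c = 1) :
    IsGreatest {q ∈ QN N | q < a / c} (a' / c') := by
  refine ⟨⟨intCast_div_mem_QN hc' ⟨-c, a, by linear_combination hdet⟩ hc'N, ?_⟩, ?_⟩
  · rw [div_lt_div_iff₀ (by exact_mod_cast hc') (by exact_mod_cast hc)]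
    exact_mod_cast (by linarith : a' * c < a * c')
  · rintro q ⟨hq, hgt⟩
    by_contra! hlt
    have := add_le_den_of_lt_of_lt hc hc' hdet hlt hgt
    have : q.den ≤ N := hq
    omega

theorem isLeast_QN_gt {N : ℕ} {a c a' c' : ℤ} (hc : 0 < c) (hc' : 0 < c') (hcN : c ≤ N)
    (hN : N < c + c') (hdet : a * c' - a' * c = 1) :
    IsLeast {q ∈ QN N | a' / c' < q} (a / c) := by
  refine ⟨⟨intCast_div_mem_QN hc ⟨c', -a', by linear_combination hdet⟩ hcN, ?_⟩, ?_⟩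
  · rw [div_lt_div_iff₀ (by exact_mod_cast hc') (by exact_mod_cast hc)]
    exact_mod_cast (by linarith : a' * c < a * c')
  · rintro q ⟨hq, hlt⟩
    by_contra! hgt
    have := add_le_den_of_lt_of_lt hc hc' hdet hlt hgt
    have : q.den ≤ N := hq
    omega

theorem lt_add_add_mul_of_forall_le {N c d n : ℤ} (hmax : ∀ n', d + n' * c ≤ N → n' ≤ n) :
    N < c + (d + n * c) := by
  by_contra! h
  linarith [hmax (n + 1) (by linarith)]

theorem add_I_mul_div_add_I_mul {a c a' c' : ℤ} (hc : 0 < c) (hdet : a * c' - a' * c = 1) :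
    ((a' : ℂ) + I * a) / (c' + I * c) =
      ((a * c + a' * c' : ℤ) + I) / ((c ^ 2 + c' ^ 2 : ℤ) : ℂ) := by
  have hne : (c' : ℂ) + I * c ≠ 0 := fun h => by
    simpa [hc.ne'] using congrArg Complex.im h
  have hsum : ((c ^ 2 + c' ^ 2 : ℤ) : ℂ) ≠ 0 := by
    exact_mod_cast (by positivity : c ^ 2 + c' ^ 2 ≠ 0)
  have hdetC : (a : ℂ) * c' - a' * c = 1 := by exact_mod_cast hdet
  rw [div_eq_div_iff hne hsum]
  push_cast
  linear_combination (I * c' - c) * hdetC - c * I_sq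

theorem sub_I_mul_div_sub_I_mul {a c a' c' : ℤ} (hc : 0 < c) (hdet : a' * c - a * c' = 1) :
    ((a' : ℂ) - I * a) / (c' - I * c) =
      ((a * c + a' * c' : ℤ) + I) / ((c ^ 2 + c' ^ 2 : ℤ) : ℂ) := by
  rw [← neg_div_neg_eq]
  convert add_I_mul_div_add_I_mul (a := a) (a' := -a') (c' := -c') hc
    (by linear_combination hdet) using 2 <;> push_cast <;> ring

theorem one_div_sq_add_sq_mem_Icc {N x y : ℝ} (hx : 0 ≤ x) (hxN : x ≤ N) (hy : 0 ≤ y)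
    (hyN : y ≤ N) (hxy : N + 1 ≤ x + y) :
    1 / (x ^ 2 + y ^ 2) ∈ Set.Icc (1 / (2 * N ^ 2)) (2 / (N + 1) ^ 2) := by
  have hpos : 0 < x ^ 2 + y ^ 2 := by nlinarith
  constructor
  · exact one_div_le_one_div_of_le hpos (by nlinarith)
  · rw [div_le_div_iff₀ hpos (by nlinarith)]
    nlinarith [sq_nonneg (x - y)]

theorem im_intCast_add_I_div_mem_Icc {N : ℕ} {a c a' c' : ℤ} (hc : 0 ≤ c) (hcN : c ≤ N)
    (hc' : 0 ≤ c') (hc'N : c' ≤ N) (hN : N < c + c') :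
    ((((a * c + a' * c' : ℤ) : ℂ) + I) / ((c ^ 2 + c' ^ 2 : ℤ) : ℂ)).im ∈
      Set.Icc (1 / (2 * (N : ℝ) ^ 2)) (2 / ((N : ℝ) + 1) ^ 2) := by
  rw [Complex.div_intCast_im, add_im, intCast_im, I_im, zero_add]
  push_cast
  exact one_div_sq_add_sq_mem_Icc (by exact_mod_cast hc) (by exact_mod_cast hcN)
    (by exact_mod_cast hc') (by exact_mod_cast hc'N) (by exact_mod_cast hN)

theorem add_mul_I_div_sub_mul_I {c v : ℝ} (hc : 0 < c) :
    ((c : ℂ) + v * I) / (c - v * I) = exp ((2 * Real.arctan (v / c) : ℝ) * I) := by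
  set θ := Real.arctan (v / c)
  have hsin : Real.sin θ * c = v * Real.cos θ := by
    have := Real.tan_arctan (v / c)
    rw [Real.tan_eq_sin_div_cos, div_eq_div_iff (Real.cos_arctan_pos _).ne' hc.ne'] at this
    linarith
  have hsinC : (Real.sin θ : ℂ) * c = v * Real.cos θ := by exact_mod_cast hsin
  have hpyth : (Real.cos θ : ℂ) ^ 2 + Real.sin θ ^ 2 = 1 := by
    exact_mod_cast Real.cos_sq_add_sin_sq θ
  have hne : (c : ℂ) - v * I ≠ 0 := fun h => by
    simpa [hc.ne'] using congrArg Complex.re h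
  rw [div_eq_iff hne, show ((2 * θ : ℝ) : ℂ) * I = (2 : ℕ) * (θ * I) by push_cast; ring,
    Complex.exp_nat_mul, exp_mul_I, ← ofReal_cos, ← ofReal_sin]
  linear_combination -(2 * Real.cos θ * I - 2 * Real.sin θ) * hsinC - (c + v * I) * hpyth
    - (-2 * Real.cos θ * Real.sin θ * v + Real.sin θ ^ 2 * c - Real.sin θ ^ 2 * v * I) * I_sq

theorem SL2Z.det_eq (γ : SL2Z) : (γ 0 0 : ℤ) * γ 1 1 - γ 0 1 * γ 1 0 = 1 := by
  have := γ.det_coe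
  rwa [Matrix.det_fin_two] at this

theorem moeb_ofReal_add_I {γ : SL2Z} (hc : 0 < γ 1 0) (u : ℝ) :
    moeb γ (u + I) = ((γ 0 0 / γ 1 0 : ℚ) : ℂ) + I / (2 * (γ 1 0 : ℂ) ^ 2)
      + I / (2 * (γ 1 0 : ℂ) ^ 2)
        * exp ((2 * Real.arctan ((γ 1 0 * u + γ 1 1) / γ 1 0) : ℝ) * I) := by
  have hdet := γ.det_eq
  rw [moeb]
  set a := γ 0 0
  set b := γ 0 1
  set c := γ 1 0
  set d := γ 1 1
  have hcR : (0 : ℝ) < c := by exact_mod_cast hc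
  have hcC : (c : ℂ) ≠ 0 := by exact_mod_cast hc.ne'
  have hdetC : (a : ℂ) * d - b * c = 1 := by exact_mod_cast hdet
  have hne : ((u : ℂ) + I) * c + d ≠ 0 := fun h => by
    simpa [hc.ne'] using congrArg Complex.im h
  have hden : ((c : ℝ) : ℂ) - ((c * u + d : ℝ) : ℂ) * I = -I * ((u + I) * c + d) := by
    push_cast
    linear_combination (c : ℂ) * I_sq
  rw [← add_mul_I_div_sub_mul_I hcR, hden]
  push_cast
  field_simp
  linear_combination (-2 * c : ℂ) * hdetC - (c : ℂ) * I_sq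

theorem image_Icc_eq_clockwise_arc {f : ℝ → ℂ} {θ : ℝ → ℝ} {O K : ℂ} {s t : ℝ}
    (hst : s ≤ t) (hθ : ContinuousOn θ (Set.Icc s t)) (hmono : MonotoneOn θ (Set.Icc s t))
    (hf : ∀ u, f u = O + K * exp (θ u * I)) :
    O + (f t - O) * exp (-I * (θ t - θ s : ℝ)) = f s ∧
      f '' Set.Icc s t =
        (fun x : ℝ => O + (f t - O) * exp (-I * x)) '' Set.Icc 0 (θ t - θ s) := by
  set arc : ℝ → ℂ := fun y => O + K * exp (y * I)
  have hrot : ∀ x : ℝ, O + (f t - O) * exp (-I * x) = arc (θ t - x) := by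
    intro x
    rw [hf, add_sub_cancel_left, mul_assoc, ← Complex.exp_add]
    simp only [arc]
    push_cast
    ring_nf
  refine ⟨by rw [hrot, sub_sub_cancel, hf], ?_⟩
  rw [funext hrot, show f = arc ∘ θ from funext hf, Set.image_comp,
    hθ.image_Icc_of_monotoneOn hst hmono, ← Function.comp_def arc, Set.image_comp,
    Set.image_const_sub_Icc, sub_zero, sub_sub_cancel]

theorem segment_ofReal_add_I {s t : ℝ} (hst : s ≤ t) :
    segment ℝ ((t : ℂ) + I) (s + I) = (fun u : ℝ => (u : ℂ) + I) '' Set.Icc s t := by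
  let L : ℝ →ᵃ[ℝ] ℂ :=
    ⟨fun u => u + I, Complex.ofRealCLM.toLinearMap, fun p v => by simp; ring⟩
  have := image_segment ℝ L t s
  rw [segment_eq_Icc', min_eq_right hst, max_eq_left hst] at this
  exact this.symm

theorem moeb_image_segment {γ : SL2Z} (hc : 0 < γ 1 0) {s t : ℝ} (hst : s ≤ t) :
    ∃ Δ : ℝ, 0 ≤ Δ ∧ Δ < 2 * π ∧
      (let O : ℂ := ((γ 0 0 / γ 1 0 : ℚ) : ℂ) + I / (2 * (γ 1 0 : ℂ) ^ 2);
       O + (moeb γ (t + I) - O) * exp (-I * Δ) = moeb γ (s + I) ∧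
       moeb γ '' segment ℝ ((t : ℂ) + I) (s + I) =
         (fun x : ℝ => O + (moeb γ (t + I) - O) * exp (-I * x)) '' Set.Icc 0 Δ) := by
  set θ : ℝ → ℝ := fun u => 2 * Real.arctan ((γ 1 0 * u + γ 1 1) / γ 1 0)
  have hcR : (0 : ℝ) < γ 1 0 := by exact_mod_cast hc
  have hmono : Monotone θ := fun x y hxy => by
    simp only [θ]
    gcongr
  have hθ : ∀ u, θ u ∈ Set.Ioo (-π) π := fun u => by
    constructor <;> linarith [Real.neg_pi_div_two_lt_arctan ((γ 1 0 * u + γ 1 1) / γ 1 0),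
      Real.arctan_lt_pi_div_two ((γ 1 0 * u + γ 1 1) / γ 1 0)]
  refine ⟨θ t - θ s, sub_nonneg.2 (hmono hst), by linarith [(hθ t).2, (hθ s).1], ?_⟩
  rw [segment_ofReal_add_I hst, Set.image_image]
  exact image_Icc_eq_clockwise_arc (f := fun u : ℝ => moeb γ (u + I)) hst (by fun_prop)
    (hmono.monotoneOn _) (moeb_ofReal_add_I hc)

theorem prop5_ford_circles_general
    (N : ℕ)
    (γ : SL2Z) (aa bb cc dd : ℤ)
    (hent : (γ 0 0 : ℤ) = aa ∧ (γ 0 1 : ℤ) = bb ∧ (γ 1 0 : ℤ) = cc ∧ (γ 1 1 : ℤ) = dd)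
    (hc0 : 0 < cc) (hcN : cc ≤ (N : ℤ))
    (n m : ℤ)
    (hn : dd + n * cc ≤ (N : ℤ) ∧ ∀ n' : ℤ, dd + n' * cc ≤ (N : ℤ) → n' ≤ n)
    (hm : -dd + m * cc ≤ (N : ℤ) ∧ ∀ m' : ℤ, -dd + m' * cc ≤ (N : ℤ) → m' ≤ m)
    (a' c' a'' c'' : ℤ)
    (ha' : a' = bb + n * aa) (hc' : c' = dd + n * cc)
    (ha'' : a'' = -bb + m * aa) (hc'' : c'' = -dd + m * cc)
    (R S : ℂ)
    (hR : R = ((a' : ℂ) + I * (aa : ℂ)) / ((c' : ℂ) + I * (cc : ℂ)))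
    (hS : S = ((a'' : ℂ) - I * (aa : ℂ)) / ((c'' : ℂ) - I * (cc : ℂ))) :
    -- bounds on c′ and c′′
    (1 ≤ c' ∧ c' ≤ (N : ℤ) ∧ 1 ≤ c'' ∧ c'' ≤ (N : ℤ) ∧
      (N : ℤ) + 1 ≤ cc + c' ∧ (N : ℤ) + 1 ≤ cc + c'') ∧
    -- (a): predecessor and successor in Q_N
    (((a' : ℚ) / (c' : ℚ)) ∈ QN N ∧ (a' : ℚ) / (c' : ℚ) < (aa : ℚ) / (cc : ℚ) ∧
      (∀ q ∈ QN N, q < (aa : ℚ) / (cc : ℚ) → q ≤ (a' : ℚ) / (c' : ℚ))) ∧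
    (((a'' : ℚ) / (c'' : ℚ)) ∈ QN N ∧ (aa : ℚ) / (cc : ℚ) < (a'' : ℚ) / (c'' : ℚ) ∧
      (∀ q ∈ QN N, (aa : ℚ) / (cc : ℚ) < q → (a'' : ℚ) / (c'' : ℚ) ≤ q)) ∧
    -- (b): tangency points
    (R = (((aa * cc + a' * c' : ℤ) : ℂ) + I) / ((cc ^ 2 + c' ^ 2 : ℤ) : ℂ) ∧
      S = (((aa * cc + a'' * c'' : ℤ) : ℂ) + I) / ((cc ^ 2 + c'' ^ 2 : ℤ) : ℂ) ∧
      FordC ((a' : ℚ) / (c' : ℚ)) ∩ FordC ((aa : ℚ) / (cc : ℚ)) = {R} ∧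
      FordC ((aa : ℚ) / (cc : ℚ)) ∩ FordC ((a'' : ℚ) / (c'' : ℚ)) = {S}) ∧
    -- (c): imaginary parts
    (R.im ∈ Set.Icc (1 / (2 * (N : ℝ) ^ 2)) (2 / ((N : ℝ) + 1) ^ 2) ∧
      S.im ∈ Set.Icc (1 / (2 * (N : ℝ) ^ 2)) (2 / ((N : ℝ) + 1) ^ 2)) ∧
    -- (d): the image of the segment [n+i, -m+i] is the clockwise arc from R to S on C_x
    (moeb γ ((n : ℂ) + I) = R ∧ moeb γ (-(m : ℂ) + I) = S ∧
      ∃ Δ : ℝ, 0 ≤ Δ ∧ Δ < 2 * π ∧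
        (let O : ℂ := ((aa : ℚ) / (cc : ℚ) : ℚ) + I / (2 * (cc : ℂ) ^ 2);
         O + (R - O) * Complex.exp (-I * Δ) = S ∧
         moeb γ '' segment ℝ ((n : ℂ) + I) (-(m : ℂ) + I) =
           (fun s : ℝ => O + (R - O) * Complex.exp (-I * s)) '' Set.Icc 0 Δ)) := by
  obtain ⟨rfl, rfl, rfl, rfl⟩ := hent
  have hdet := γ.det_eq
  have hc'N : c' ≤ N := hc' ▸ hn.1
  have hc''N : c'' ≤ N := hc'' ▸ hm.1
  have hc'gt : N < γ 1 0 + c' := hc' ▸ lt_add_add_mul_of_forall_le hn.2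
  have hc''gt : N < γ 1 0 + c'' := hc'' ▸ lt_add_add_mul_of_forall_le hm.2
  have hdet' : γ 0 0 * c' - a' * γ 1 0 = 1 := by rw [ha', hc']; linear_combination hdet
  have hdet'' : a'' * γ 1 0 - γ 0 0 * c'' = 1 := by rw [ha'', hc'']; linear_combination hdet
  have hR' := hR.trans (add_I_mul_div_add_I_mul hc0 hdet')
  have hS' := hS.trans (sub_I_mul_div_sub_I_mul hc0 hdet'')
  have hmoebR : moeb γ (n + I) = R := by
    rw [moeb, hR, ha', hc']
    push_cast
    ring_nf
  have hmoebS : moeb γ (-m + I) = S := by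
    rw [moeb, hS, ha'', hc'', ← neg_div_neg_eq]
    push_cast
    ring_nf
  have hmn : (-m : ℝ) ≤ n := by exact_mod_cast (by nlinarith : -m ≤ n)
  obtain ⟨Δ, hΔ0, hΔ, harc⟩ := moeb_image_segment hc0 hmn
  obtain ⟨⟨hpred, hpred_lt⟩, hpred_max⟩ := isGreatest_QN_lt hc0 (by omega) hc'N hc'gt hdet'
  obtain ⟨⟨hsucc, hsucc_gt⟩, hsucc_min⟩ :=
    isLeast_QN_gt (a := a'') (c := c'') (by omega) hc0 hc''N (by omega) hdet''
  refine ⟨⟨by omega, hc'N, by omega, hc''N, by omega, by omega⟩,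
    ⟨hpred, hpred_lt, fun q hq hlt => hpred_max ⟨hq, hlt⟩⟩,
    ⟨hsucc, hsucc_gt, fun q hq hgt => hsucc_min ⟨hq, hgt⟩⟩,
    ⟨hR', hS', ?_, ?_⟩, ⟨?_, ?_⟩, hmoebR, hmoebS, Δ, hΔ0, hΔ, ?_⟩
  · rw [FordC_inter_FordC hc0 (by omega) hdet', hR']
  · rw [FordC_inter_FordC (by omega) hc0 hdet'', hS', add_comm (a'' * c''), add_comm (c'' ^ 2)]
  · rw [hR']
    exact im_intCast_add_I_div_mem_Icc hc0.le hcN (by omega) hc'N hc'gt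
  · rw [hS']
    exact im_intCast_add_I_div_mem_Icc hc0.le hcN (by omega) hc''N hc''gt
  · simpa only [ofReal_neg, ofReal_intCast, hmoebR, hmoebS] using harc

/-- **Proposition 5 (§3.2).**  Let `N ≥ 1`, `γ = (a b; c d) ∈ SL₂(ℤ)` with `0 < c ≤ N`,
`x = a/c`; let `n`, `m` be the largest integers with `d + nc ≤ N`, `-d + mc ≤ N`, and put
`a′ = b + na`, `c′ = d + nc`, `a′′ = -b + ma`, `c′′ = -d + mc`.  Then
`1 ≤ c′, c′′ ≤ N`, `c + c′ ≥ N+1`, `c + c′′ ≥ N+1`, and: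
(a) `a′/c′` is the predecessor and `a′′/c′′` the successor of `x` in `Q_N`;
(b) the Ford circles `C_{a′/c′}` and `C_x` are tangent at
`R = (ac + a′c′ + i)/(c² + c′²) = (a′ + ia)/(c′ + ic)` (their intersection is exactly `{R}`),
and `C_x`, `C_{a′′/c′′}` are tangent at `S = (ac + a′′c′′ + i)/(c² + c′′²) = (a′′ - ia)/(c′′ - ic)`;
(c) `Im R` and `Im S` lie in `[1/(2N²), 2/(N+1)²]`;
(d) `γ(n+i) = R`, `γ(-m+i) = S`, and the image of the segment `[n+i, -m+i]` under `z ↦ γz`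
is the arc of `C_x` from `R` to `S` traversed clockwise. -/
theorem prop5_ford_circles
    (N : ℕ) (hN : 1 ≤ N)
    (γ : SL2Z) (aa bb cc dd : ℤ)
    (hent : (γ 0 0 : ℤ) = aa ∧ (γ 0 1 : ℤ) = bb ∧ (γ 1 0 : ℤ) = cc ∧ (γ 1 1 : ℤ) = dd)
    (hc0 : 0 < cc) (hcN : cc ≤ (N : ℤ))
    (n m : ℤ)
    (hn : dd + n * cc ≤ (N : ℤ) ∧ ∀ n' : ℤ, dd + n' * cc ≤ (N : ℤ) → n' ≤ n)
    (hm : -dd + m * cc ≤ (N : ℤ) ∧ ∀ m' : ℤ, -dd + m' * cc ≤ (N : ℤ) → m' ≤ m)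
    (a' c' a'' c'' : ℤ)
    (ha' : a' = bb + n * aa) (hc' : c' = dd + n * cc)
    (ha'' : a'' = -bb + m * aa) (hc'' : c'' = -dd + m * cc)
    (R S : ℂ)
    (hR : R = ((a' : ℂ) + I * (aa : ℂ)) / ((c' : ℂ) + I * (cc : ℂ)))
    (hS : S = ((a'' : ℂ) - I * (aa : ℂ)) / ((c'' : ℂ) - I * (cc : ℂ))) :
    -- bounds on c′ and c′′
    (1 ≤ c' ∧ c' ≤ (N : ℤ) ∧ 1 ≤ c'' ∧ c'' ≤ (N : ℤ) ∧
      (N : ℤ) + 1 ≤ cc + c' ∧ (N : ℤ) + 1 ≤ cc + c'') ∧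
    -- (a): predecessor and successor in Q_N
    (((a' : ℚ) / (c' : ℚ)) ∈ QN N ∧ (a' : ℚ) / (c' : ℚ) < (aa : ℚ) / (cc : ℚ) ∧
      (∀ q ∈ QN N, q < (aa : ℚ) / (cc : ℚ) → q ≤ (a' : ℚ) / (c' : ℚ))) ∧
    (((a'' : ℚ) / (c'' : ℚ)) ∈ QN N ∧ (aa : ℚ) / (cc : ℚ) < (a'' : ℚ) / (c'' : ℚ) ∧
      (∀ q ∈ QN N, (aa : ℚ) / (cc : ℚ) < q → (a'' : ℚ) / (c'' : ℚ) ≤ q)) ∧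
    -- (b): tangency points
    (R = (((aa * cc + a' * c' : ℤ) : ℂ) + I) / ((cc ^ 2 + c' ^ 2 : ℤ) : ℂ) ∧
      S = (((aa * cc + a'' * c'' : ℤ) : ℂ) + I) / ((cc ^ 2 + c'' ^ 2 : ℤ) : ℂ) ∧
      FordC ((a' : ℚ) / (c' : ℚ)) ∩ FordC ((aa : ℚ) / (cc : ℚ)) = {R} ∧
      FordC ((aa : ℚ) / (cc : ℚ)) ∩ FordC ((a'' : ℚ) / (c'' : ℚ)) = {S}) ∧
    -- (c): imaginary parts
    (R.im ∈ Set.Icc (1 / (2 * (N : ℝ) ^ 2)) (2 / ((N : ℝ) + 1) ^ 2) ∧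
      S.im ∈ Set.Icc (1 / (2 * (N : ℝ) ^ 2)) (2 / ((N : ℝ) + 1) ^ 2)) ∧
    -- (d): the image of the segment [n+i, -m+i] is the clockwise arc from R to S on C_x
    (moeb γ ((n : ℂ) + I) = R ∧ moeb γ (-(m : ℂ) + I) = S ∧
      ∃ Δ : ℝ, 0 ≤ Δ ∧ Δ < 2 * π ∧
        (let O : ℂ := ((aa : ℚ) / (cc : ℚ) : ℚ) + I / (2 * (cc : ℂ) ^ 2);
         O + (R - O) * Complex.exp (-I * Δ) = S ∧
         moeb γ '' segment ℝ ((n : ℂ) + I) (-(m : ℂ) + I) =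
           (fun s : ℝ => O + (R - O) * Complex.exp (-I * s)) '' Set.Icc 0 Δ)) :=
  prop5_ford_circles_general N γ aa bb cc dd hent hc0 hcN n m hn hm a' c' a'' c'' ha' hc' ha'' hc''
    R S hR hS
end
end
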